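/- arXiv:1702.05827 — 2 statements merged into one kernel-verified Lean document; each statement's English description precedes it below -/
import Mathlib

section
/- For every polynomial Q of degree at most p with complex coefficients, the geometric mean of |Q| over the p-th roots of unity is at most twice the Mahler measure of Q: (∏_{j=0}^{p-1} |Q(ζ_p^j)|)^{1/p} ≤ 2 M_0(Q), where ζ_p = exp(2πi/p). -/
open Real Complex intervalIntegral

/-- The Mahler measure of a polynomial `Q`. -/
noncomputable def mahlerMeasure (Q : Polynomial ℂ) : ℝ :=
  Real.exp ((2 * π)⁻¹ *
    ∫ t in (0:ℝ)..(2 * π), Real.log ‖Q.eval (Complex.exp (t * Complex.I))‖)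

noncomputable def Complex.abs : AbsoluteValue ℂ ℝ := NormedField.toAbsoluteValue ℂ

@[simp] theorem Complex.abs_apply' (z : ℂ) : Complex.abs z = ‖z‖ := rfl

theorem Complex.norm_eq_abs (z : ℂ) : ‖z‖ = Complex.abs z := rfl

theorem Complex.abs_exp (z : ℂ) : Complex.abs (Complex.exp z) = Real.exp z.re := Complex.norm_exp z

theorem Complex.abs_conj (z : ℂ) : Complex.abs ((starRingEnd ℂ) z) = Complex.abs z := by simp

theorem Complex.abs_ofReal (r : ℝ) : Complex.abs (r : ℂ) = |r| := by simp

theorem Complex.continuous_abs : Continuous Complex.abs := continuous_norm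

lemma key_lt (a : ℂ) (ha : Complex.abs a < 1) :
    ∫ t in (0:ℝ)..(2*π), Real.log (Complex.abs (Complex.exp (t * Complex.I) - a)) = 0 := by
  set f : ℂ → ℂ := fun z => Complex.log (1 + -((starRingEnd ℂ) a * z)) with hf
  have hdiff : ∀ z ∈ Metric.closedBall (0:ℂ) 1, DifferentiableAt ℂ f z := by
    intro z hz
    simp only [Metric.mem_closedBall, dist_zero_right] at hz
    have hm : ‖-((starRingEnd ℂ) a * z)‖ < 1 := by
      rw [norm_neg, norm_mul]
      calc ‖(starRingEnd ℂ) a‖ * ‖z‖ ≤ ‖(starRingEnd ℂ) a‖ * 1 :=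
            mul_le_mul_of_nonneg_left hz (norm_nonneg _)
        _ = Complex.abs a := by simp
        _ < 1 := ha
    exact (differentiableAt_id.const_mul _).neg.const_add 1 |>.clog
      (Complex.mem_slitPlane_of_norm_lt_one hm)
  have hmv := Complex.two_pi_I_inv_smul_circleIntegral_sub_inv_smul_of_differentiable_on_off_countable
    (s := (∅ : Set ℂ)) Set.countable_empty (Metric.mem_ball_self one_pos)
    (fun z hz => (hdiff z hz).continuousAt.continuousWithinAt)
    (fun z hz => hdiff z (Metric.ball_subset_closedBall hz.1))
  have hf0 : f 0 = 0 := by simp [hf]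
  rw [hf0, smul_eq_zero] at hmv
  have h2 : (2 * π * Complex.I : ℂ)⁻¹ ≠ 0 := by
    simp [Complex.I_ne_zero, Real.pi_ne_zero, Complex.ofReal_ne_zero]
  have hint : (∮ z in C((0:ℂ), 1), (z - 0)⁻¹ • f z) = 0 := hmv.resolve_left h2
  -- unfold circle integral
  rw [circleIntegral] at hint
  simp only [deriv_circleMap, circleMap, Complex.ofReal_one, zero_add, one_mul, sub_zero,
    smul_eq_mul] at hint
  have hne : ∀ t : ℝ, Complex.exp (t * Complex.I) ≠ 0 := fun t => Complex.exp_ne_zero _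
  have hint2 : (∫ t in (0:ℝ)..(2*π), Complex.I * f (Complex.exp (t * Complex.I))) = 0 := by
    rw [← hint]
    apply intervalIntegral.integral_congr
    intro t _
    field_simp [hne t]
  rw [intervalIntegral.integral_const_mul, mul_eq_zero] at hint2
  have hint3 : (∫ t in (0:ℝ)..(2*π), f (Complex.exp (t * Complex.I))) = 0 :=
    hint2.resolve_left Complex.I_ne_zero
  -- take real parts
  have hmem : ∀ t : ℝ, Complex.exp (t * Complex.I) ∈ Metric.closedBall (0:ℂ) 1 := by
    intro t
    simp only [Metric.mem_closedBall, dist_zero_right, Complex.norm_eq_abs, Complex.abs_exp]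
    simp
  have hcont : Continuous fun t : ℝ => f (Complex.exp (t * Complex.I)) := by
    rw [continuous_iff_continuousAt]
    intro t
    have h1 : ContinuousAt (fun t : ℝ => Complex.exp (t * Complex.I)) t := by fun_prop
    show ContinuousAt (f ∘ fun t : ℝ => Complex.exp (t * Complex.I)) t
    exact ContinuousAt.comp ((hdiff _ (hmem t)).continuousAt) h1
  have hre : (∫ t in (0:ℝ)..(2*π), (f (Complex.exp (t * Complex.I))).re) = 0 := by
    have := Complex.reCLM.intervalIntegral_comp_comm (μ := MeasureTheory.volume) (hcont.intervalIntegrable 0 (2*π))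
    simp only [Complex.reCLM_apply] at this
    rw [this, hint3, Complex.zero_re]
  refine Eq.trans ?_ hre
  apply intervalIntegral.integral_congr
  intro t _
  simp only [hf, Complex.log_re]
  congr 1
  have key : 1 + -((starRingEnd ℂ) a * Complex.exp (t * Complex.I))
      = Complex.exp (t * Complex.I) * (starRingEnd ℂ) (Complex.exp (t * Complex.I) - a) := by
    rw [map_sub, mul_sub, ← Complex.exp_conj]
    simp only [map_mul, Complex.conj_I, Complex.conj_ofReal]
    rw [mul_neg, ← Complex.exp_add]
    norm_num
    ring
  rw [key, norm_mul, Complex.norm_exp, Complex.norm_eq_abs ((starRingEnd ℂ) _), Complex.abs_conj]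
  simp

lemma cont_ne (a : ℂ) (ha : Complex.abs a ≠ 1) :
    Continuous fun t : ℝ => Real.log (Complex.abs (Complex.exp (t * Complex.I) - a)) := by
  have hin : Continuous fun t : ℝ => Complex.abs (Complex.exp (t * Complex.I) - a) :=
    Complex.continuous_abs.comp (((Complex.continuous_ofReal.mul continuous_const).cexp).sub continuous_const)
  apply hin.log
  intro t
  rw [ne_eq, map_eq_zero, sub_eq_zero]
  intro h
  apply ha
  rw [← h, Complex.abs_exp]
  simp

lemma key_ne (a : ℂ) (ha : Complex.abs a ≠ 1) :
    ∫ t in (0:ℝ)..(2*π), Real.log (Complex.abs (Complex.exp (t * Complex.I) - a))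
      = 2 * π * Real.log (max 1 (Complex.abs a)) := by
  rcases lt_or_gt_of_ne ha with h | h
  · rw [max_eq_left h.le, Real.log_one, mul_zero, key_lt a h]
  · have ha0 : a ≠ 0 := by
      intro h0; rw [h0, map_zero] at h; linarith
    set b : ℂ := (starRingEnd ℂ) a⁻¹ with hb
    have hab : Complex.abs b < 1 := by
      rw [hb, Complex.abs_conj, map_inv₀]
      rw [inv_lt_one_iff₀]
      right; exact h
    have hptwise : ∀ t : ℝ, Real.log (Complex.abs (Complex.exp (t * Complex.I) - a))
        = Real.log (Complex.abs a) + Real.log (Complex.abs (Complex.exp (t * Complex.I) - b)) := by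
      intro t
      have hI : Complex.exp (t * Complex.I) - a
          = -(a * Complex.exp (t * Complex.I)) * (starRingEnd ℂ) (Complex.exp (t * Complex.I) - b) := by
        rw [map_sub, hb, Complex.conj_conj, ← Complex.exp_conj]
        simp only [map_mul, Complex.conj_I, Complex.conj_ofReal]
        rw [show ((t:ℂ) * -Complex.I) = -(t * Complex.I) by ring, Complex.exp_neg]
        have hEne : Complex.exp ((t:ℂ) * Complex.I) ≠ 0 := Complex.exp_ne_zero _
        field_simp
        ring
      rw [hI, map_mul, map_neg_eq_map, map_mul, Complex.abs_exp, Complex.abs_conj]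
      simp only [Complex.mul_I_re, Complex.ofReal_im, neg_zero, Real.exp_zero, mul_one]
      rw [Real.log_mul (by simpa using ha0) ?_]
      · rw [ne_eq, map_eq_zero, sub_eq_zero]
        intro hcc
        rw [← hcc, Complex.abs_exp] at hab
        simp at hab
    have hbne : Complex.abs b ≠ 1 := ne_of_lt hab
    rw [intervalIntegral.integral_congr (fun t _ => hptwise t)]
    rw [intervalIntegral.integral_add (intervalIntegrable_const) ((cont_ne b hbne).intervalIntegrable _ _)]
    rw [key_lt b hab, add_zero, intervalIntegral.integral_const, max_eq_right h.le,
      smul_eq_mul, sub_zero]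

open MeasureTheory in
lemma null_exp (a : ℂ) : MeasureTheory.volume {t : ℝ | Complex.exp (t * Complex.I) = a} = 0 := by
  rcases Set.eq_empty_or_nonempty {t : ℝ | Complex.exp (t * Complex.I) = a} with hE | ⟨t₀, ht₀⟩
  · rw [hE]; simp
  · apply Set.Countable.measure_zero
    apply Set.Countable.mono ?_ (Set.countable_range (fun k : ℤ => t₀ + k * (2 * π)))
    intro t ht
    simp only [Set.mem_setOf_eq] at ht ht₀
    obtain ⟨n, hn⟩ := Complex.exp_eq_exp_iff_exists_int.mp (ht.trans ht₀.symm)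
    refine ⟨n, ?_⟩
    have hn' : (t:ℂ) * Complex.I = ((t₀:ℂ) + n * (2*π)) * Complex.I := by
      linear_combination hn
    have h2 := mul_right_cancel₀ Complex.I_ne_zero hn'
    have h3 : ((t:ℝ):ℂ) = ((t₀ + n * (2*π) : ℝ):ℂ) := by push_cast; exact h2
    exact_mod_cast h3.symm

open MeasureTheory in
lemma key_all (a : ℂ) :
    IntervalIntegrable (fun t => Real.log (Complex.abs (Complex.exp (t * Complex.I) - a)))
      MeasureTheory.volume 0 (2*π) ∧
    2 * π * Real.log (max 1 (Complex.abs a)) ≤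
      ∫ t in (0:ℝ)..(2*π), Real.log (Complex.abs (Complex.exp (t * Complex.I) - a)) := by
  by_cases ha : Complex.abs a ≠ 1
  · exact ⟨(cont_ne a ha).intervalIntegrable _ _, le_of_eq (key_ne a ha).symm⟩
  push_neg at ha
  set g : ℝ → ℝ := fun t => Real.log (Complex.abs (Complex.exp (t * Complex.I) - a)) with hg
  set F : ℝ → ℝ := fun t => Real.log 2 - g t with hF
  have habs : Continuous fun t : ℝ => Complex.abs (Complex.exp (t * Complex.I) - a) :=
    Complex.continuous_abs.comp (((Complex.continuous_ofReal.mul continuous_const).cexp).sub continuous_const)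
  have hgmeas : Measurable g := Real.measurable_log.comp habs.measurable
  have hFmeas : Measurable F := measurable_const.sub hgmeas
  have hFnonneg : ∀ t, 0 ≤ F t := by
    intro t
    have h2 : Complex.abs (Complex.exp (t * Complex.I) - a) ≤ 2 := by
      calc Complex.abs (Complex.exp (t * Complex.I) - a)
          ≤ Complex.abs (Complex.exp (t * Complex.I)) + Complex.abs a :=
            AbsoluteValue.sub_le_add _ _ _
        _ ≤ 2 := by rw [ha, Complex.abs_exp]; simp; norm_num
    have : g t ≤ Real.log 2 := by
      rcases eq_or_ne (Complex.abs (Complex.exp (t * Complex.I) - a)) 0 with h0 | h0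
      · rw [hg]; simp only [h0, Real.log_zero]; positivity
      · exact Real.log_le_log (lt_of_le_of_ne (Complex.abs.nonneg _) (Ne.symm h0)) h2
    simpa [hF] using this
  -- approximating sequence
  set r : ℕ → ℝ := fun n => 1 - 1/(n+1) with hr
  have hr01 : ∀ n, 0 ≤ r n ∧ r n < 1 := by
    intro n
    have h1 : (0:ℝ) < 1/(n+1) := by positivity
    have h2 : 1/((n:ℝ)+1) ≤ 1 := by
      rw [div_le_one (by positivity)]
      linarith [Nat.cast_nonneg (α := ℝ) n]
    constructor
    · rw [hr]; simp only; linarith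
    · rw [hr]; simp only; linarith
  have hrtend : Filter.Tendsto r Filter.atTop (nhds 1) := by
    rw [hr]
    have h0 : Filter.Tendsto (fun n : ℕ => 1/((n:ℝ)+1)) Filter.atTop (nhds 0) :=
      tendsto_one_div_add_atTop_nhds_zero_nat
    simpa using tendsto_const_nhds.sub h0
  set G : ℕ → ℝ → ℝ := fun n t => Real.log 2 - Real.log (Complex.abs (Complex.exp (t * Complex.I) - (r n : ℂ) * a)) with hG
  have hrabs : ∀ n, Complex.abs ((r n : ℂ) * a) < 1 := by
    intro n
    rw [map_mul, Complex.abs_ofReal, _root_.abs_of_nonneg (hr01 n).1, ha, mul_one]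
    exact (hr01 n).2
  have hGint : ∀ n, ∫ t in (0:ℝ)..(2*π), G n t = 2 * π * Real.log 2 := by
    intro n
    rw [hG]
    simp only
    rw [intervalIntegral.integral_sub intervalIntegrable_const
      ((cont_ne _ (ne_of_lt (hrabs n))).intervalIntegrable _ _), key_lt _ (hrabs n),
      intervalIntegral.integral_const, sub_zero, smul_eq_mul, sub_zero]
  have hGnonneg : ∀ n t, 0 ≤ G n t := by
    intro n t
    have h2 : Complex.abs (Complex.exp (t * Complex.I) - (r n : ℂ) * a) ≤ 2 := by
      calc _ ≤ Complex.abs (Complex.exp (t * Complex.I)) + Complex.abs ((r n :ℂ) * a) :=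
            AbsoluteValue.sub_le_add _ _ _
        _ ≤ 2 := by
            rw [Complex.abs_exp]
            simp only [Complex.mul_I_re, Complex.ofReal_im, neg_zero, Real.exp_zero]
            linarith [hrabs n]
    rw [hG, sub_nonneg]
    rcases eq_or_ne (Complex.abs (Complex.exp (t * Complex.I) - (r n : ℂ) * a)) 0 with h0 | h0
    · simp only [h0, Real.log_zero]; positivity
    · exact Real.log_le_log (lt_of_le_of_ne (Complex.abs.nonneg _) (Ne.symm h0)) h2
  have hN : MeasureTheory.volume {t : ℝ | Complex.exp (t * Complex.I) = a} = 0 := null_exp a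
  have hGmeas : ∀ n, Measurable (G n) := by
    intro n
    exact measurable_const.sub (Real.measurable_log.comp
      (Complex.continuous_abs.comp (((Complex.continuous_ofReal.mul continuous_const).cexp).sub
        continuous_const)).measurable)
  have hGcont : ∀ n, Continuous (G n) :=
    fun n => continuous_const.sub (cont_ne _ (ne_of_lt (hrabs n)))
  have hπ : (0:ℝ) ≤ 2 * π := by positivity
  -- pointwise convergence off the null set
  have htend : ∀ t : ℝ, Complex.exp (t * Complex.I) ≠ a →
      Filter.Tendsto (fun n => ENNReal.ofReal (G n t)) Filter.atTop
        (nhds (ENNReal.ofReal (F t))) := by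
    intro t hne
    have habs0 : Complex.abs (Complex.exp (t * Complex.I) - a) ≠ 0 := by
      rw [ne_eq, map_eq_zero, sub_eq_zero]; exact hne
    have h1 : Filter.Tendsto (fun n => Complex.exp (t * Complex.I) - (r n : ℂ) * a)
        Filter.atTop (nhds (Complex.exp (t * Complex.I) - a)) := by
      have := (((Complex.continuous_ofReal.tendsto 1).comp hrtend).mul_const a).const_sub
        (Complex.exp (t * Complex.I))
      simpa using this
    have h2 : Filter.Tendsto (fun n => G n t) Filter.atTop (nhds (F t)) := by
      rw [hG, hF, hg]
      simp only
      apply Filter.Tendsto.const_sub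
      exact (Real.continuousAt_log habs0).tendsto.comp (Complex.continuous_abs.tendsto _ |>.comp h1)
    exact (ENNReal.continuous_ofReal.tendsto _).comp h2
  have hae : ∀ᵐ (t : ℝ) ∂(MeasureTheory.volume.restrict (Set.Ioc (0:ℝ) (2*π))),
      Complex.exp (t * Complex.I) ≠ a := by
    apply MeasureTheory.ae_restrict_of_ae
    rw [MeasureTheory.ae_iff]
    convert hN using 2
    simp [not_not]
  -- Fatou
  have hlint : ∀ n, (∫⁻ t in Set.Ioc (0:ℝ) (2*π), ENNReal.ofReal (G n t))
      = ENNReal.ofReal (2 * π * Real.log 2) := by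
    intro n
    rw [← MeasureTheory.ofReal_integral_eq_lintegral_ofReal
      ((hGcont n).integrableOn_Ioc) (Filter.Eventually.of_forall (hGnonneg n))]
    congr 1
    rw [← intervalIntegral.integral_of_le hπ, hGint n]
  have hfatou := MeasureTheory.lintegral_liminf_le
    (μ := MeasureTheory.volume.restrict (Set.Ioc (0:ℝ) (2*π))) (u := Filter.atTop)
    (fun n => ENNReal.measurable_ofReal.comp (hGmeas n))
  have hkey : (∫⁻ t in Set.Ioc (0:ℝ) (2*π), ENNReal.ofReal (F t))
      ≤ ENNReal.ofReal (2 * π * Real.log 2) := by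
    have hcongr : (∫⁻ t in Set.Ioc (0:ℝ) (2*π), ENNReal.ofReal (F t))
        = ∫⁻ t in Set.Ioc (0:ℝ) (2*π), Filter.liminf (fun n => ENNReal.ofReal (G n t)) Filter.atTop := by
      apply MeasureTheory.lintegral_congr_ae
      filter_upwards [hae] with t hne
      exact ((htend t hne).liminf_eq).symm
    rw [hcongr]
    simp only [Function.comp_def] at hfatou
    refine le_trans hfatou ?_
    have heq2 : (fun n => ∫⁻ t in Set.Ioc (0:ℝ) (2*π), ENNReal.ofReal (G n t))
        = fun _ => ENNReal.ofReal (2 * π * Real.log 2) := funext hlint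
    rw [heq2, Filter.liminf_const]
  -- integrability of F hence g
  have hFint : MeasureTheory.IntegrableOn F (Set.Ioc (0:ℝ) (2*π)) := by
    refine ⟨hFmeas.aestronglyMeasurable, ?_⟩
    rw [MeasureTheory.hasFiniteIntegral_iff_norm]
    have heq : ∀ t : ℝ, ENNReal.ofReal ‖F t‖ = ENNReal.ofReal (F t) := fun t => by
      rw [Real.norm_of_nonneg (hFnonneg t)]
    simp_rw [heq]
    exact lt_of_le_of_lt hkey ENNReal.ofReal_lt_top
  have hgint : MeasureTheory.IntegrableOn g (Set.Ioc (0:ℝ) (2*π)) := by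
    have := (MeasureTheory.integrable_const (Real.log 2) (μ := MeasureTheory.volume.restrict (Set.Ioc (0:ℝ) (2*π)))).sub hFint
    apply this.congr
    filter_upwards with t
    simp only [Pi.sub_apply, hF]
    ring
  constructor
  · rw [intervalIntegrable_iff_integrableOn_Ioc_of_le hπ]
    exact hgint
  · rw [ha, max_self, Real.log_one, mul_zero]
    have hFle : (∫ t in Set.Ioc (0:ℝ) (2*π), F t) ≤ 2 * π * Real.log 2 := by
      have h1 := MeasureTheory.ofReal_integral_eq_lintegral_ofReal hFint
        (Filter.Eventually.of_forall hFnonneg)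
      rw [← ENNReal.ofReal_le_ofReal_iff (by positivity), h1]
      exact hkey
    have hsplit : (∫ t in (0:ℝ)..(2*π), g t)
        = 2 * π * Real.log 2 - ∫ t in Set.Ioc (0:ℝ) (2*π), F t := by
      rw [intervalIntegral.integral_of_le hπ]
      have : ∀ t : ℝ, g t = Real.log 2 - F t := fun t => by rw [hF]; ring
      simp_rw [this]
      rw [MeasureTheory.integral_sub (MeasureTheory.integrable_const _) hFint]
      congr 1
      rw [MeasureTheory.setIntegral_const, Real.volume_real_Ioc_of_le hπ, sub_zero,
        smul_eq_mul]
    rw [hsplit]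
    linarith

open MeasureTheory in
lemma null_eval (Q : Polynomial ℂ) (hQ0 : Q ≠ 0) :
    MeasureTheory.volume {t : ℝ | Q.eval (Complex.exp (t * Complex.I)) = 0} = 0 := by
  have hsub : {t : ℝ | Q.eval (Complex.exp (t * Complex.I)) = 0}
      ⊆ ⋃ w ∈ Q.roots.toFinset, {t : ℝ | Complex.exp (t * Complex.I) = w} := by
    intro t ht
    simp only [Set.mem_setOf_eq] at ht
    simp only [Set.mem_iUnion, Set.mem_setOf_eq]
    exact ⟨Complex.exp (t * Complex.I), by
      rw [Multiset.mem_toFinset, Polynomial.mem_roots hQ0]; exact ht, rfl⟩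
  refine measure_mono_null hsub ?_
  exact (measure_biUnion_null_iff (Q.roots.toFinset : Finset ℂ).countable_toSet).mpr
    (fun w _ => null_exp w)

open MeasureTheory in
lemma poly_lower : ∀ (n : ℕ) (Q : Polynomial ℂ), Q ≠ 0 → Q.natDegree = n →
    IntervalIntegrable (fun t => Real.log (Complex.abs (Q.eval (Complex.exp (t * Complex.I)))))
      MeasureTheory.volume 0 (2*π) ∧
    2 * π * (Real.log (Complex.abs Q.leadingCoeff) +
      ((Q.roots.map (fun z => Real.log (max 1 (Complex.abs z)))).sum)) ≤
      ∫ t in (0:ℝ)..(2*π), Real.log (Complex.abs (Q.eval (Complex.exp (t * Complex.I)))) := by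
  intro n
  induction n with
  | zero =>
    intro Q hQ0 hdeg
    obtain ⟨c, rfl⟩ := Polynomial.natDegree_eq_zero.mp hdeg
    have hc : c ≠ 0 := by simpa using hQ0
    simp only [Polynomial.eval_C, Polynomial.roots_C, Multiset.map_zero, Multiset.sum_zero,
      add_zero, Polynomial.leadingCoeff_C]
    refine ⟨intervalIntegrable_const, ?_⟩
    rw [intervalIntegral.integral_const, smul_eq_mul, sub_zero]
  | succ n ih =>
    intro Q hQ0 hdeg
    have hdpos : 0 < Q.degree := by
      rw [Polynomial.degree_eq_natDegree hQ0, hdeg]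
      exact_mod_cast Nat.succ_pos n
    obtain ⟨z, hz⟩ := Complex.exists_root hdpos
    obtain ⟨Q', hQ'⟩ := Polynomial.dvd_iff_isRoot.mpr hz
    have hX : (Polynomial.X - Polynomial.C z) ≠ 0 := Polynomial.X_sub_C_ne_zero z
    have hQ'0 : Q' ≠ 0 := by rintro rfl; rw [mul_zero] at hQ'; exact hQ0 hQ'
    have hdeg' : Q'.natDegree = n := by
      have := Polynomial.natDegree_mul hX hQ'0
      rw [← hQ', hdeg, Polynomial.natDegree_X_sub_C] at this
      omega
    obtain ⟨hint', hle'⟩ := ih Q' hQ'0 hdeg'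
    obtain ⟨hintz, hlez⟩ := key_all z
    have hlc : Q.leadingCoeff = Q'.leadingCoeff := by
      rw [hQ', Polynomial.leadingCoeff_mul, Polynomial.leadingCoeff_X_sub_C, one_mul]
    have hroots : Q.roots = z ::ₘ Q'.roots := by
      rw [hQ', Polynomial.roots_mul (hQ' ▸ hQ0), Polynomial.roots_X_sub_C]
      rw [Multiset.singleton_add]
    -- a.e. equality of integrands
    have haeq : ∀ᵐ (t : ℝ) ∂(MeasureTheory.volume : Measure ℝ),
        Real.log (Complex.abs (Q.eval (Complex.exp (t * Complex.I))))
          = Real.log (Complex.abs (Complex.exp (t * Complex.I) - z))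
            + Real.log (Complex.abs (Q'.eval (Complex.exp (t * Complex.I)))) := by
      have h1 : ∀ᵐ (t : ℝ) ∂(MeasureTheory.volume : Measure ℝ),
          Complex.exp (t * Complex.I) ≠ z := by
        rw [MeasureTheory.ae_iff]; convert null_exp z using 2; simp [not_not]
      have h2 : ∀ᵐ (t : ℝ) ∂(MeasureTheory.volume : Measure ℝ),
          Q'.eval (Complex.exp (t * Complex.I)) ≠ 0 := by
        rw [MeasureTheory.ae_iff]; convert null_eval Q' hQ'0 using 2; simp [not_not]
      filter_upwards [h1, h2] with t ht1 ht2
      rw [hQ', Polynomial.eval_mul, map_mul, Real.log_mul, Polynomial.eval_sub,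
        Polynomial.eval_X, Polynomial.eval_C]
      · rw [ne_eq, map_eq_zero]
        simp only [Polynomial.eval_sub, Polynomial.eval_X, Polynomial.eval_C, sub_eq_zero]
        exact ht1
      · rw [ne_eq, map_eq_zero]; exact ht2
    have hsum : IntervalIntegrable
        (fun t => Real.log (Complex.abs (Complex.exp (t * Complex.I) - z))
          + Real.log (Complex.abs (Q'.eval (Complex.exp (t * Complex.I)))))
        MeasureTheory.volume 0 (2*π) := hintz.add hint'
    have hint : IntervalIntegrable
        (fun t => Real.log (Complex.abs (Q.eval (Complex.exp (t * Complex.I)))))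
        MeasureTheory.volume 0 (2*π) := by
      apply hsum.congr_ae
      exact MeasureTheory.ae_restrict_of_ae (haeq.mono fun t ht => ht.symm)
    have hIeq : (∫ t in (0:ℝ)..(2*π), Real.log (Complex.abs (Q.eval (Complex.exp (t * Complex.I)))))
        = (∫ t in (0:ℝ)..(2*π), Real.log (Complex.abs (Complex.exp (t * Complex.I) - z)))
          + ∫ t in (0:ℝ)..(2*π), Real.log (Complex.abs (Q'.eval (Complex.exp (t * Complex.I)))) := by
      rw [← intervalIntegral.integral_add hintz hint']
      apply intervalIntegral.integral_congr_ae
      filter_upwards [haeq] with t ht _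
      exact ht
    refine ⟨hint, ?_⟩
    rw [hIeq, hlc, hroots]
    rw [Multiset.map_cons, Multiset.sum_cons]
    have := add_le_add hlez hle'
    calc 2 * π * (Real.log (Complex.abs Q'.leadingCoeff) +
          (Real.log (max 1 (Complex.abs z)) +
            (Multiset.map (fun z => Real.log (max 1 (Complex.abs z))) Q'.roots).sum))
        = 2 * π * Real.log (max 1 (Complex.abs z)) +
          2 * π * (Real.log (Complex.abs Q'.leadingCoeff) +
            (Multiset.map (fun z => Real.log (max 1 (Complex.abs z))) Q'.roots).sum) := by ring
      _ ≤ _ := add_le_add hlez hle'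

lemma exp_msum (s : Multiset ℂ) :
    Real.exp ((s.map (fun z => Real.log (max 1 (Complex.abs z)))).sum)
      = (s.map (fun z => max 1 (Complex.abs z))).prod := by
  induction s using Multiset.induction with
  | empty => simp
  | cons a s ih =>
    simp only [Multiset.map_cons, Multiset.sum_cons, Multiset.prod_cons, Real.exp_add, ih]
    rw [Real.exp_log (lt_of_lt_of_le one_pos (le_max_left _ _))]

lemma mahler_ge (Q : Polynomial ℂ) (hQ0 : Q ≠ 0) :
    Complex.abs Q.leadingCoeff * ((Q.roots.map (fun z => max 1 (Complex.abs z))).prod)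
      ≤ mahlerMeasure Q := by
  obtain ⟨_, hle⟩ := poly_lower Q.natDegree Q hQ0 rfl
  rw [mahlerMeasure]
  have hπ : (0:ℝ) < 2 * π := by positivity
  have h1 : Real.log (Complex.abs Q.leadingCoeff) +
      ((Q.roots.map (fun z => Real.log (max 1 (Complex.abs z)))).sum)
      ≤ (2*π)⁻¹ * ∫ t in (0:ℝ)..(2*π),
          Real.log (Complex.abs (Q.eval (Complex.exp (t * Complex.I)))) := by
    have h2 := mul_le_mul_of_nonneg_left hle (le_of_lt (inv_pos.mpr hπ))
    rwa [← mul_assoc, inv_mul_cancel₀ hπ.ne', one_mul] at h2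
  calc Complex.abs Q.leadingCoeff * ((Q.roots.map (fun z => max 1 (Complex.abs z))).prod)
      = Real.exp (Real.log (Complex.abs Q.leadingCoeff) +
          ((Q.roots.map (fun z => Real.log (max 1 (Complex.abs z)))).sum)) := by
        rw [Real.exp_add, exp_msum, Real.exp_log]
        exact AbsoluteValue.pos _ (Polynomial.leadingCoeff_ne_zero.mpr hQ0)
    _ ≤ _ := Real.exp_le_exp.mpr h1

lemma prod_swap {ι α M : Type*} [CommMonoid M] (s : Finset ι) (R : Multiset α) (f : ι → α → M) :
    ∏ j ∈ s, (R.map (f j)).prod = (R.map (fun z => ∏ j ∈ s, f j z)).prod := by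
  induction R using Multiset.induction with
  | empty => simp
  | cons a R ih => simp [Multiset.map_cons, Multiset.prod_cons, Finset.prod_mul_distrib, ih]

theorem stmt0 (p : ℕ) (hp : 1 ≤ p) (Q : Polynomial ℂ) (hQ : Q.natDegree ≤ p) :
    (∏ j ∈ Finset.range p,
        ‖Q.eval (Complex.exp (2 * π * Complex.I / p) ^ j)‖) ^ ((p : ℝ)⁻¹)
      ≤ 2 * mahlerMeasure Q := by
  have hM : 0 < mahlerMeasure Q := Real.exp_pos _
  by_cases hQ0 : Q = 0
  · subst hQ0
    rw [show (∏ j ∈ Finset.range p, ‖(0:Polynomial ℂ).eval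
        (Complex.exp (2 * π * Complex.I / p) ^ j)‖) = 0 by
      apply Finset.prod_eq_zero (Finset.mem_range.mpr (Nat.lt_of_lt_of_le Nat.zero_lt_one hp))
      simp]
    rw [Real.zero_rpow (by positivity : ((p:ℝ))⁻¹ ≠ 0)]
    linarith
  set ζ : ℂ := Complex.exp (2 * π * Complex.I / p) with hζdef
  have hp0 : (p : ℕ) ≠ 0 := Nat.one_le_iff_ne_zero.mp hp
  have hζ : IsPrimitiveRoot ζ p := Complex.isPrimitiveRoot_exp p hp0
  set c : ℂ := Q.leadingCoeff with hc
  have hc0 : c ≠ 0 := Polynomial.leadingCoeff_ne_zero.mpr hQ0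
  set R : Multiset ℂ := Q.roots with hR
  have hcard : R.card = Q.natDegree :=
    (Polynomial.splits_iff_card_roots.mp (IsAlgClosed.splits Q))
  -- evaluation formula
  have hQeval : ∀ x : ℂ, Q.eval x = c * (R.map (fun z => x - z)).prod := by
    intro x
    conv_lhs => rw [(Polynomial.C_leadingCoeff_mul_prod_multiset_X_sub_C hcard).symm]
    rw [Polynomial.eval_mul, Polynomial.eval_C, Polynomial.eval_multiset_prod, Multiset.map_map]
    congr 1
    apply congrArg Multiset.prod
    apply Multiset.map_congr rfl
    intro z _
    simp
  -- roots of unity product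
  have hrup : ∀ z : ℂ, (∏ j ∈ Finset.range p, (z - ζ ^ j)) = z ^ p - 1 := by
    intro z
    have := X_pow_sub_C_eq_prod hζ (Nat.pos_of_ne_zero hp0) (one_pow p)
    have he := congrArg (Polynomial.eval z) this
    rw [Polynomial.eval_sub, Polynomial.eval_pow, Polynomial.eval_X, Polynomial.eval_C,
      Polynomial.eval_prod] at he
    rw [he]
    apply Finset.prod_congr rfl
    intro j _
    simp
  -- the discrete product
  have hprod : (∏ j ∈ Finset.range p, Complex.abs (Q.eval (ζ ^ j)))
      = Complex.abs c ^ p * (R.map (fun z => Complex.abs (z ^ p - 1))).prod := by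
    calc ∏ j ∈ Finset.range p, Complex.abs (Q.eval (ζ ^ j))
        = ∏ j ∈ Finset.range p, (Complex.abs c * (R.map (fun z => Complex.abs (ζ ^ j - z))).prod) := by
          apply Finset.prod_congr rfl
          intro j _
          rw [hQeval, map_mul]
          congr 1
          rw [map_multiset_prod, Multiset.map_map]
          rfl
      _ = Complex.abs c ^ p * ∏ j ∈ Finset.range p, (R.map (fun z => Complex.abs (ζ ^ j - z))).prod := by
          rw [Finset.prod_mul_distrib, Finset.prod_const, Finset.card_range]
      _ = Complex.abs c ^ p * (R.map (fun z => ∏ j ∈ Finset.range p, Complex.abs (ζ ^ j - z))).prod := by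
          rw [prod_swap]
      _ = Complex.abs c ^ p * (R.map (fun z => Complex.abs (z ^ p - 1))).prod := by
          congr 1
          apply congrArg Multiset.prod
          apply Multiset.map_congr rfl
          intro z _
          rw [← hrup z, map_prod]
          apply Finset.prod_congr rfl
          intro j _
          rw [← AbsoluteValue.map_neg Complex.abs]
          congr 1; ring
  -- bound each factor
  have hfac : ∀ z : ℂ, Complex.abs (z ^ p - 1) ≤ 2 * (max 1 (Complex.abs z)) ^ p := by
    intro z
    have h1 : Complex.abs (z ^ p - 1) ≤ Complex.abs z ^ p + 1 := by
      calc Complex.abs (z ^ p - 1) ≤ Complex.abs (z ^ p) + Complex.abs 1 :=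
            AbsoluteValue.sub_le_add _ _ _
        _ = Complex.abs z ^ p + 1 := by rw [map_pow, map_one]
    have h2 : Complex.abs z ^ p ≤ (max 1 (Complex.abs z)) ^ p :=
      pow_le_pow_left₀ (AbsoluteValue.nonneg _ _) (le_max_right _ _) p
    have h3 : (1:ℝ) ≤ (max 1 (Complex.abs z)) ^ p :=
      one_le_pow₀ (le_max_left _ _)
    linarith
  set P : ℝ := (R.map (fun z => max 1 (Complex.abs z))).prod with hP
  have hPnn : 0 ≤ P := by
    apply Multiset.prod_nonneg
    intro x hx
    obtain ⟨z, _, rfl⟩ := Multiset.mem_map.mp hx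
    positivity
  have hMge : Complex.abs c * P ≤ mahlerMeasure Q := mahler_ge Q hQ0
  -- bound the multiset product
  have hmprod : (R.map (fun z => Complex.abs (z ^ p - 1))).prod
      ≤ (R.map (fun z => 2 * (max 1 (Complex.abs z)) ^ p)).prod := by
    clear hprod hcard
    induction R using Multiset.induction with
    | empty => simp
    | cons a R ih =>
      simp only [Multiset.map_cons, Multiset.prod_cons]
      apply mul_le_mul (hfac a) ih ?_ ?_
      · apply Multiset.prod_nonneg
        intro x hx
        obtain ⟨z, _, rfl⟩ := Multiset.mem_map.mp hx
        exact AbsoluteValue.nonneg _ _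
      · positivity
  have hsplit2 : (R.map (fun z => 2 * (max 1 (Complex.abs z)) ^ p)).prod
      = 2 ^ R.card * P ^ p := by
    rw [show (fun z : ℂ => 2 * (max 1 (Complex.abs z)) ^ p)
        = fun z : ℂ => (fun _ => (2:ℝ)) z * (fun z => (max 1 (Complex.abs z)) ^ p) z from rfl,
      Multiset.prod_map_mul, Multiset.map_const', Multiset.prod_replicate,
      Multiset.prod_map_pow]
  have hfinal : (∏ j ∈ Finset.range p, Complex.abs (Q.eval (ζ ^ j)))
      ≤ (2 * mahlerMeasure Q) ^ p := by
    rw [hprod]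
    calc Complex.abs c ^ p * (R.map (fun z => Complex.abs (z ^ p - 1))).prod
        ≤ Complex.abs c ^ p * (2 ^ R.card * P ^ p) := by
          apply mul_le_mul_of_nonneg_left (le_of_le_of_eq hmprod hsplit2) (by positivity)
      _ ≤ Complex.abs c ^ p * (2 ^ p * P ^ p) := by
          apply mul_le_mul_of_nonneg_left ?_ (by positivity)
          apply mul_le_mul_of_nonneg_right ?_ (by positivity)
          apply pow_le_pow_right₀ one_le_two
          rw [hcard]; exact hQ
      _ = (2 * (Complex.abs c * P)) ^ p := by rw [mul_pow, mul_pow]; ring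
      _ ≤ (2 * mahlerMeasure Q) ^ p := by
          apply pow_le_pow_left₀ (by positivity)
          linarith
  have h0 : 0 ≤ ∏ j ∈ Finset.range p, Complex.abs (Q.eval (ζ ^ j)) :=
    Finset.prod_nonneg (fun j _ => AbsoluteValue.nonneg _ _)
  calc (∏ j ∈ Finset.range p, Complex.abs (Q.eval (ζ ^ j))) ^ ((p:ℝ)⁻¹)
      ≤ ((2 * mahlerMeasure Q) ^ p) ^ ((p:ℝ)⁻¹) :=
        Real.rpow_le_rpow h0 hfinal (by positivity)
    _ = 2 * mahlerMeasure Q := by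
        rw [← Real.rpow_natCast (2 * mahlerMeasure Q) p, ← Real.rpow_mul (by positivity),
          mul_inv_cancel₀ (by exact_mod_cast hp0), Real.rpow_one]
end

section
/- The function C(x) := ∏_{k=0}^∞ cos²(2x/(2k+1)) satisfies C(x) ≤ c·2^{−3x/π} for all x ≥ 1, for some absolute constant c > 0. -/
open Real

theorem stmt14 :
    ∃ c : ℝ, 0 < c ∧ ∀ x : ℝ, 1 ≤ x →
      (∏' k : ℕ, Real.cos (2 * x / (2 * (k : ℝ) + 1)) ^ 2) ≤ c * (2 : ℝ) ^ (-(3 * x) / π) := by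
  refine ⟨4, by norm_num, fun x hx => ?_⟩
  have hπ : 0 < π := Real.pi_pos
  set f : ℕ → ℝ := fun k => Real.cos (2 * x / (2 * (k : ℝ) + 1)) ^ 2 with hfdef
  have hf0 : ∀ k, 0 ≤ f k := fun k => sq_nonneg _
  have hf1 : ∀ k, f k ≤ 1 := fun k => Real.cos_sq_le_one _
  set P : Finset ℕ → ℝ := fun s => ∏ k ∈ s, f k with hPdef
  have hP0 : ∀ s, 0 ≤ P s := fun s => Finset.prod_nonneg (fun k _ => hf0 k)
  have hPanti : Antitone P := by
    intro s t hst
    have h1 : (∏ k ∈ t \ s, f k) * ∏ k ∈ s, f k = ∏ k ∈ t, f k :=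
      Finset.prod_sdiff hst
    have h2 : (∏ k ∈ t \ s, f k) ≤ 1 := Finset.prod_le_one (fun k _ => hf0 k) (fun k _ => hf1 k)
    have h3 : 0 ≤ (∏ k ∈ t \ s, f k) := Finset.prod_nonneg (fun k _ => hf0 k)
    calc P t = (∏ k ∈ t \ s, f k) * P s := h1.symm
      _ ≤ 1 * P s := by
          apply mul_le_mul_of_nonneg_right h2 (hP0 s)
      _ = P s := one_mul _
  have hbdd : BddBelow (Set.range P) := ⟨0, by rintro _ ⟨s, rfl⟩; exact hP0 s⟩
  have hhas : HasProd f (⨅ s, P s) := tendsto_atTop_ciInf hPanti hbdd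
  have htp : (∏' k, f k) = ⨅ s, P s := hhas.tprod_eq
  set t : ℝ := 3 * x / π with htdef
  have ht0 : 0 < t := by positivity
  set m : ℕ := ⌈(t - 1) / 2⌉₊ with hmdef
  have hN1 : 1 ≤ ⌈t / 2⌉₊ := Nat.one_le_ceil_iff.mpr (by positivity)
  set N : ℕ := ⌈t / 2⌉₊ - 1 with hNdef
  have hNcast : (N : ℝ) = (⌈t / 2⌉₊ : ℝ) - 1 := by
    rw [hNdef, Nat.cast_sub hN1, Nat.cast_one]
  have hNle : (N : ℝ) ≤ t / 2 := by
    have := Nat.ceil_lt_add_one (by positivity : (0:ℝ) ≤ t / 2)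
    rw [hNcast]; linarith
  have hNge : t / 2 - 1 ≤ (N : ℝ) := by
    have := Nat.le_ceil (t / 2)
    rw [hNcast]; linarith
  have hm_le : (m : ℝ) ≤ (t + 1) / 2 := by
    rcases le_or_gt ((t - 1) / 2) 0 with h | h
    · have : m = 0 := Nat.ceil_eq_zero.mpr h
      rw [this]; push_cast; linarith
    · have := Nat.ceil_lt_add_one h.le
      rw [hmdef]; linarith
  have hm_ge : (t - 1) / 2 ≤ (m : ℝ) := Nat.le_ceil _
  -- each factor on the interval is ≤ 1/4
  have hfac : ∀ k ∈ Finset.Ico m (m + N), f k ≤ 1 / 4 := by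
    intro k hk
    rw [Finset.mem_Ico] at hk
    have hk1 : (m : ℝ) ≤ k := Nat.cast_le.mpr hk.1
    have hk2 : (k : ℝ) ≤ (m : ℝ) + N - 1 := by
      have h' : k + 1 ≤ m + N := hk.2
      have : ((k : ℝ) + 1) ≤ (m : ℝ) + N := by exact_mod_cast h'
      linarith
    have hkub : (k : ℝ) ≤ t - 1 / 2 := by linarith
    have hklb : t ≤ 2 * (k : ℝ) + 1 := by linarith
    have hden : (0 : ℝ) < 2 * (k : ℝ) + 1 := by positivity
    set θ : ℝ := 2 * x / (2 * (k : ℝ) + 1) with hθdef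
    have hθlb : π / 3 ≤ θ := by
      rw [hθdef, le_div_iff₀ hden]
      have h6 : 2 * (k : ℝ) + 1 ≤ 2 * t := by linarith
      have : π * (2 * t) = 6 * x := by
        rw [htdef]; field_simp; ring
      nlinarith
    have hθub : θ ≤ 2 * π / 3 := by
      rw [hθdef, div_le_iff₀ hden]
      have : π * t = 3 * x := by
        rw [htdef]; field_simp
      nlinarith
    have hcub : Real.cos θ ≤ 1 / 2 := by
      have := Real.cos_le_cos_of_nonneg_of_le_pi (by positivity : (0:ℝ) ≤ π / 3)
        (by linarith : θ ≤ π) hθlb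
      rwa [Real.cos_pi_div_three] at this
    have hclb : -(1 / 2) ≤ Real.cos θ := by
      have := Real.cos_le_cos_of_nonneg_of_le_pi (by positivity : (0:ℝ) ≤ θ)
        (by linarith : 2 * π / 3 ≤ π) hθub
      have h23 : Real.cos (2 * π / 3) = -(1 / 2) := by
        have : (2 : ℝ) * π / 3 = π - π / 3 := by ring
        rw [this, Real.cos_pi_sub, Real.cos_pi_div_three]
      · rw [h23] at this; linarith
    have : Real.cos θ ^ 2 ≤ (1 / 2) ^ 2 := sq_le_sq' hclb hcub
    calc f k = Real.cos θ ^ 2 := rfl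
      _ ≤ (1 / 2) ^ 2 := this
      _ = 1 / 4 := by norm_num
  have hPS : P (Finset.Ico m (m + N)) ≤ (1 / 4 : ℝ) ^ N := by
    calc P (Finset.Ico m (m + N)) ≤ ∏ _k ∈ Finset.Ico m (m + N), (1 / 4 : ℝ) :=
          Finset.prod_le_prod (fun k _ => hf0 k) hfac
      _ = (1 / 4 : ℝ) ^ N := by rw [Finset.prod_const, Nat.card_Ico]; congr 1; omega
  have hfinal : (1 / 4 : ℝ) ^ N ≤ 4 * (2 : ℝ) ^ (-(3 * x) / π) := by
    have hexp : -(3 * x) / π = -t := by rw [htdef]; ring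
    rw [hexp]
    have h1 : (1 / 4 : ℝ) ^ N = (2 : ℝ) ^ ((-2 : ℝ) * N) := by
      rw [show ((-2 : ℝ) * N) = (-2 : ℝ) * (N : ℝ) from rfl,
        Real.rpow_mul (by norm_num : (0:ℝ) ≤ 2), Real.rpow_natCast]
      congr 1
      rw [show (-2 : ℝ) = -(2 : ℕ) by norm_num, Real.rpow_neg (by norm_num),
        Real.rpow_natCast]
      norm_num
    have h2 : (4 : ℝ) * (2 : ℝ) ^ (-t) = (2 : ℝ) ^ (2 - t) := by
      have h4 : (2 : ℝ) ^ (2 : ℝ) = 4 := by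
        rw [show (2 : ℝ) = ((2 : ℕ) : ℝ) from by norm_num, Real.rpow_natCast]
        norm_num
      rw [show (2 : ℝ) - t = 2 + (-t) by ring, Real.rpow_add (by norm_num : (0:ℝ) < 2), h4]
    rw [h1, h2]
    apply Real.rpow_le_rpow_of_exponent_le one_le_two
    linarith
  calc (∏' k, f k) = ⨅ s, P s := htp
    _ ≤ P (Finset.Ico m (m + N)) := ciInf_le hbdd _
    _ ≤ (1 / 4 : ℝ) ^ N := hPS
    _ ≤ 4 * (2 : ℝ) ^ (-(3 * x) / π) := hfinal
end
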